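/- For the two-way within-transformation matrix J: Σ_r (J_rr)² = N*²/N and Σ_r Σ_s (J_rs)⁴ = N*·( N*³ + (n−1)³ + (T−1)³ + 1 ) / N³. -/

import Mathlib

open Matrix Finset
open scoped Kronecker

/-- The two-way within-transformation matrix
`J = (I_T − T⁻¹ι_Tι_T′) ⊗ (I_n − n⁻¹ι_nι_n′)`. -/
noncomputable def twoWayJ (n T : ℕ) : Matrix (Fin T × Fin n) (Fin T × Fin n) ℝ :=
  ((1 : Matrix (Fin T) (Fin T) ℝ) - (T : ℝ)⁻¹ • Matrix.of (fun _ _ => (1 : ℝ))) ⊗ₖ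
  ((1 : Matrix (Fin n) (Fin n) ℝ) - (n : ℝ)⁻¹ • Matrix.of (fun _ _ => (1 : ℝ)))

/-!
`J` is the Kronecker product of the centering matrices `C_T = I − T⁻¹ιι'` and `C_n`, and
`(a b) ^ k = a ^ k b ^ k` makes both sums multiplicative over a Kronecker product. So it suffices
to compute them for one centering matrix `C_m`, whose entries are `1 − 1/m` on the diagonal and
`−1/m` off it: `Σ (C_m)ᵢᵢ² = (m − 1)² / m` and `Σ (C_m)ᵢⱼ⁴ = (m − 1)((m − 1)³ + 1) / m³`.
-/

namespace Matrix

section Kronecker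

variable {R l m p q : Type*} [CommSemiring R] [Fintype l] [Fintype m] [Fintype p] [Fintype q]

theorem sum_diag_pow_kronecker (A : Matrix l l R) (B : Matrix m m R) (k : ℕ) :
    ∑ r, (A ⊗ₖ B) r r ^ k = (∑ i, A i i ^ k) * ∑ j, B j j ^ k := by
  simp only [Fintype.sum_prod_type, kroneckerMap_apply, mul_pow, Finset.sum_mul_sum]

theorem sum_sum_pow_kronecker (A : Matrix l m R) (B : Matrix p q R) (k : ℕ) :
    ∑ r, ∑ s, (A ⊗ₖ B) r s ^ k = (∑ i, ∑ j, A i j ^ k) * ∑ i, ∑ j, B i j ^ k := by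
  simp only [Fintype.sum_prod_type, kroneckerMap_apply, mul_pow, Finset.sum_mul_sum]

end Kronecker

section Centering

def centeringMatrix (K ι : Type*) [Field K] [Fintype ι] [DecidableEq ι] : Matrix ι ι K :=
  1 - (Fintype.card ι : K)⁻¹ • of fun _ _ => 1

variable {K ι : Type*} [Field K] [Fintype ι] [DecidableEq ι]

theorem centeringMatrix_apply (i j : ι) :
    centeringMatrix K ι i j = (if i = j then 1 else 0) - (Fintype.card ι : K)⁻¹ := by
  simp [centeringMatrix, one_apply]

theorem sum_diag_sq_centeringMatrix :
    ∑ i, centeringMatrix K ι i i ^ 2 =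
      ((Fintype.card ι : K) - 1) ^ 2 / Fintype.card ι := by
  simp only [centeringMatrix_apply, if_true, sum_const, card_univ, nsmul_eq_mul]
  by_cases hm : (Fintype.card ι : K) = 0
  · simp [hm]
  · field_simp

theorem sum_sum_pow_four_centeringMatrix :
    ∑ i, ∑ j, centeringMatrix K ι i j ^ 4 =
      ((Fintype.card ι : K) - 1) * (((Fintype.card ι : K) - 1) ^ 3 + 1) /
        (Fintype.card ι : K) ^ 3 := by
  set c : K := (Fintype.card ι : K)⁻¹ with hc
  -- `δᵢⱼ ^ 4 = δᵢⱼ`, so the fourth power of an entry is affine in `δᵢⱼ`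
  have hentry (i j : ι) : centeringMatrix K ι i j ^ 4 =
      (if i = j then (1 - c) ^ 4 - c ^ 4 else 0) + c ^ 4 := by
    rw [centeringMatrix_apply]
    split_ifs <;> ring
  simp only [hentry, sum_add_distrib, sum_ite_eq, mem_univ, if_true, sum_const, card_univ,
    nsmul_eq_mul]
  by_cases hm : (Fintype.card ι : K) = 0
  · simp [c, hm]
  · rw [hc]
    field_simp
    ring

end Centering

end Matrix

theorem twoWayJ_eq_kronecker (n T : ℕ) :
    twoWayJ n T = centeringMatrix ℝ (Fin T) ⊗ₖ centeringMatrix ℝ (Fin n) := by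
  simp only [twoWayJ, centeringMatrix, Fintype.card_fin]

/-- For the two-way within-transformation matrix `J` (with `N = nT`,
`N* = (n−1)(T−1)`): `Σ_r (J_rr)² = N*²/N` and
`Σ_r Σ_s (J_rs)⁴ = N*·(N*³ + (n−1)³ + (T−1)³ + 1)/N³`. -/
theorem twoWayJ_pi1_pi2 (n T : ℕ) (hn : 2 ≤ n) (hT : 2 ≤ T)
    (J : Matrix (Fin T × Fin n) (Fin T × Fin n) ℝ) (hJ : J = twoWayJ n T)
    (N Nstar : ℕ) (hN : N = n * T) (hNstar : Nstar = (n - 1) * (T - 1)) :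
    (∑ r, (J r r) ^ 2 = (Nstar : ℝ) ^ 2 / N) ∧
    (∑ r, ∑ s, (J r s) ^ 4 =
      (Nstar : ℝ) * ((Nstar : ℝ) ^ 3 + ((n : ℝ) - 1) ^ 3 + ((T : ℝ) - 1) ^ 3 + 1)
        / (N : ℝ) ^ 3) := by
  subst hJ hN hNstar
  have hn0 : (n : ℝ) ≠ 0 := by positivity
  have hT0 : (T : ℝ) ≠ 0 := by positivity
  rw [twoWayJ_eq_kronecker, sum_diag_pow_kronecker, sum_sum_pow_kronecker,
    sum_diag_sq_centeringMatrix, sum_diag_sq_centeringMatrix,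
    sum_sum_pow_four_centeringMatrix, sum_sum_pow_four_centeringMatrix]
  simp only [Fintype.card_fin]
  push_cast [Nat.cast_sub (by omega : 1 ≤ n), Nat.cast_sub (by omega : 1 ≤ T)]
  constructor
  · field_simp
  · field_simp
    ring
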